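/- arXiv:2010.09464 — 5 statements merged into one kernel-verified Lean document; each statement's English description precedes it below -/
import Mathlib

section
/- If a learner h is monotone on every text, then h is strongly monotone on every text. Concretely: suppose that for every text T and all i ≤ j, W_{h(T[i])} ∩ content(T) ⊆ W_{h(T[j])} ∩ content(T). Then for every text T and all i ≤ j, W_{h(T[i])} ⊆ W_{h(T[j])}. (Proof idea: if x ∈ W_{h(T[i])} \ W_{h(T[j])} with i < j, consider the text T' = T[j] ⌢ x ⌢ T(j) ⌢ T(j+1) ⌢ ⋯; then x ∈ content(T') witnesses failure of monotonicity on T'.) -/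
/-- The `e`-th computably enumerable set: the domain of the `e`-th partial
computable function in the standard numbering of `Nat.Partrec.Code`. -/
def Wset (e : ℕ) : Set ℕ := {x | ((Denumerable.ofNat Nat.Partrec.Code e).eval x).Dom}

/-- A text: a function from ℕ to ℕ ∪ {#}, with `none` playing the role of the pause symbol #. -/
def Text := ℕ → Option ℕ

/-- The content of a text: its range without the pause symbol. -/
def content (T : Text) : Set ℕ := {x | ∃ n, T n = some x}

/-- The initial segment `T[n]` of a text, as a finite sequence over ℕ ∪ {#}. -/
def seg (T : Text) (n : ℕ) : List (Option ℕ) := (List.range n).map T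

/-- The content of a finite sequence over ℕ ∪ {#}. -/
def contentSeg (l : List (Option ℕ)) : Set ℕ := {x | (some x) ∈ l}

/-- The content of `T[n]` as a finite set. -/
def fset (T : Text) (n : ℕ) : Finset ℕ := ((List.range n).map T).reduceOption.toFinset

/-- a learner that is monotone on every text is strongly monotone on every text. -/
theorem mon_global_imp_smon_global (h : List (Option ℕ) → ℕ)
    (hmon : ∀ T : Text, ∀ i j : ℕ, i ≤ j →
      Wset (h (seg T i)) ∩ content T ⊆ Wset (h (seg T j)) ∩ content T) :
    ∀ T : Text, ∀ i j : ℕ, i ≤ j → Wset (h (seg T i)) ⊆ Wset (h (seg T j)) := by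
  intro T i j hij x hx
  set T' : Text := fun n => if n < j then T n else some x with hT'
  have hseg : ∀ k, k ≤ j → seg T' k = seg T k := by
    intro k hk
    unfold seg
    apply List.map_congr_left
    intro a ha
    rw [List.mem_range] at ha
    simp [hT', lt_of_lt_of_le ha hk]
  have h1 : x ∈ Wset (h (seg T' i)) ∩ content T' := by
    constructor
    · rw [hseg i (le_trans hij (le_refl j) |>.trans (le_refl j))]; exact hx
    · exact ⟨j, by simp [hT']⟩
  have h2 := hmon T' i j hij h1
  rw [hseg j (le_refl j)] at h2
  exact h2.1
end

section
/- A learner h is τ(Mon) (globally monotone) if and only if it is τ(SMon) (globally strongly monotone). Hence for any success criterion δ and interaction operator β, the classes of languages learnable under τ(SMon) and under τ(Mon) coincide: [τ(SMon)Txtβδ] = [τ(Mon)Txtβδ]. -/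
/-- The hypothesis sequence of a (starred) learner on a text. -/
def hypSeq (h : List (Option ℕ) → ℕ) (T : Text) : ℕ → ℕ := fun n => h (seg T n)

/-- SMon as a predicate on hypothesis sequences and texts. -/
def SMonSeq (p : ℕ → ℕ) (T : Text) : Prop :=
  ∀ n m : ℕ, n ≤ m → Wset (p n) ⊆ Wset (p m)

/-- Mon as a predicate on hypothesis sequences and texts. -/
def MonSeq (p : ℕ → ℕ) (T : Text) : Prop :=
  ∀ n m : ℕ, n ≤ m → Wset (p n) ∩ content T ⊆ Wset (p m) ∩ content T

/-- Globally strongly monotone learner: SMon holds on every text. -/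
def GloballySMon (h : List (Option ℕ) → ℕ) : Prop := ∀ T : Text, SMonSeq (hypSeq h T) T

/-- Globally monotone learner: Mon holds on every text. -/
def GloballyMon (h : List (Option ℕ) → ℕ) : Prop := ∀ T : Text, MonSeq (hypSeq h T) T

/-- The class of classes of languages learnable, under success criterion `δ`, by some
learner admissible for the interaction operator `β` (modelled as the predicate picking
out the starred forms of `β`-learners) which satisfies the global restriction `glob`. -/
def LearnableClasses (glob : (List (Option ℕ) → ℕ) → Prop)
    (β : (List (Option ℕ) → ℕ) → Prop)
    (δ : (ℕ → ℕ) → Text → Prop) : Set (Set (Set ℕ)) :=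
  {𝓛 | ∃ h : List (Option ℕ) → ℕ, β h ∧ glob h ∧
    ∀ L ∈ 𝓛, ∀ T : Text, content T = L → δ (hypSeq h T) T}

/-- a learner is globally monotone iff it is globally strongly monotone;
hence for every interaction operator β and success criterion δ,
[τ(SMon)Txtβδ] = [τ(Mon)Txtβδ]. -/
theorem globallyMon_iff_globallySMon_and_classes_eq :
    (∀ h : List (Option ℕ) → ℕ, GloballyMon h ↔ GloballySMon h) ∧
    (∀ β : (List (Option ℕ) → ℕ) → Prop, ∀ δ : (ℕ → ℕ) → Text → Prop,
      LearnableClasses GloballySMon β δ = LearnableClasses GloballyMon β δ) := by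
  have key : ∀ h : List (Option ℕ) → ℕ, GloballyMon h ↔ GloballySMon h := by
    intro h
    constructor
    · intro hm T n m hnm x hx
      set T' : Text := fun k => if k < m then T k else some x with hT'
      have hseg : ∀ j, j ≤ m → seg T' j = seg T j := by
        intro j hj
        unfold seg
        apply List.map_congr_left
        intro k hk
        have : k < m := lt_of_lt_of_le (List.mem_range.mp hk) hj
        simp [hT', this]
      have hxc : x ∈ content T' := ⟨m, by simp [hT']⟩
      have := hm T' n m hnm ⟨by rw [hypSeq, hseg n (le_trans hnm le_rfl)]; exact hx, hxc⟩
      have hx' : x ∈ Wset (hypSeq h T' m) := this.1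
      rwa [hypSeq, hseg m le_rfl] at hx'
    · intro hs T n m hnm x hx
      exact ⟨hs T n m hnm hx.1, hx.2⟩
  refine ⟨key, fun β δ => ?_⟩
  unfold LearnableClasses
  ext 𝓛
  simp only [Set.mem_setOf_eq]
  constructor
  · rintro ⟨h, hβ, hg, hl⟩
    exact ⟨h, hβ, (key h).mpr hg, hl⟩
  · rintro ⟨h, hβ, hg, hl⟩
    exact ⟨h, hβ, (key h).mp hg, hl⟩
end

section
/- The class L = {2ℕ} ∪ {{0, 2, 4, …, 2k, 2k+1} : k ∈ ℕ} is learnable by a total, set-driven, monotone, explanatory learner: there is a total computable h from finite subsets of ℕ to indices such that for every L ∈ L and every text T of L, the sequence n ↦ h(content(T[n])) converges to a single index e with W_e = L, and the hypothesis sequence satisfies the Mon condition on every text of L. -/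
/-- The language L_{2k+1} = {0, 2, 4, …, 2k, 2k+1}. -/
def Lodd (k : ℕ) : Set ℕ := {n | (Even n ∧ n ≤ 2 * k) ∨ n = 2 * k + 1}

/-- The even numbers 2ℕ. -/
def Ev : Set ℕ := {n | Even n}

/-- The class {2ℕ} ∪ { L_{2k+1} : k ∈ ℕ }. -/
def sepClass : Set (Set ℕ) := insert Ev {L | ∃ k : ℕ, L = Lodd k}

/-! The learner conjectures 2ℕ as long as it has seen only even numbers, and L_{2k+1} once its
least odd datum is 2k+1. On a text for 2ℕ it never changes its mind. On a text for L_{2k+1} the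
only odd datum is 2k+1, so the learner changes its mind exactly once, from 2ℕ to the correct
L_{2k+1}; this is monotone because 2ℕ ∩ L_{2k+1} ⊆ L_{2k+1}. The learner is computable because the
least odd element of a finite set is read off its increasing enumeration, which is primitive
recursive in the canonical code of the set. -/

open Encodable Denumerable Nat.Partrec.Code
open Nat.Partrec (Code)

theorem exists_code_curry_Wset_eq {p : ℕ → ℕ → Prop} (hp : REPred fun q : ℕ × ℕ => p q.1 q.2) :
    ∃ c : Code, ∀ k, Wset (encode (c.curry k)) = {x | p k x} := by
  have hf : Partrec fun n : ℕ =>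
      (Part.assert (p n.unpair.1 n.unpair.2) fun _ => Part.some ()).map fun _ => (0 : ℕ) :=
    (hp.comp Computable.unpair).map ((Computable.const 0).comp Computable.snd).to₂
  obtain ⟨c, hc⟩ := exists_code.1 (Partrec.nat_iff.1 hf)
  refine ⟨c, fun k => Set.ext fun x => ?_⟩
  simp [Wset, eval_curry, hc, Part.assert]

theorem primrecPred_even : PrimrecPred (Even : ℕ → Prop) :=
  (PrimrecRel.comp Primrec.eq (Primrec.nat_mod.comp .id (.const 2)) (.const 0)).of_eq
    fun _ => Nat.even_iff.symm

theorem primrecRel_mem_Lodd : PrimrecRel fun k x => x ∈ Lodd k := by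
  have h2k : Primrec fun q : ℕ × ℕ => 2 * q.1 := Primrec.nat_mul.comp (.const 2) .fst
  exact ((primrecPred_even.comp .snd).and (Primrec.nat_le.comp .snd h2k)).or
    (Primrec.eq.comp .snd (Primrec.succ.comp h2k))

theorem exists_code_Wset_eq {s : Set ℕ} (hs : REPred (· ∈ s)) : ∃ c : Code, Wset (encode c) = s :=
  let ⟨c, hc⟩ := exists_code_curry_Wset_eq (p := fun _ x => x ∈ s) (hs.comp Computable.snd)
  ⟨c.curry 0, hc 0⟩

noncomputable def evCode : Code :=
  (exists_code_Wset_eq primrecPred_even.computablePred.to_re).choose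

theorem Wset_evCode : Wset (encode evCode) = Ev :=
  (exists_code_Wset_eq primrecPred_even.computablePred.to_re).choose_spec

noncomputable def loddCode : Code :=
  (exists_code_curry_Wset_eq (p := fun k x => x ∈ Lodd k)
    primrecRel_mem_Lodd.computablePred.to_re).choose

theorem Wset_loddCode_curry (k : ℕ) : Wset (encode (loddCode.curry k)) = Lodd k :=
  (exists_code_curry_Wset_eq (p := fun k x => x ∈ Lodd k)
    primrecRel_mem_Lodd.computablePred.to_re).choose_spec k

theorem foldl_raise'_eq (l : List ℕ) (n : ℕ) (acc : List ℕ) :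
    (l.foldl (fun q m => (m + q.1 + 1, q.2 ++ [m + q.1])) (n, acc)).2 = acc ++ raise' l n := by
  induction l generalizing n acc with
  | nil => simp [raise']
  | cons m l ih => simp [raise', ih]

theorem Primrec.raise' : Primrec₂ Denumerable.raise' := by
  have hstep : Primrec₂ fun (_ : List ℕ × ℕ) (q : (ℕ × List ℕ) × ℕ) =>
      (q.2 + q.1.1 + 1, q.1.2 ++ [q.2 + q.1.1]) := by
    have hsum : Primrec fun p : (List ℕ × ℕ) × (ℕ × List ℕ) × ℕ => p.2.2 + p.2.1.1 :=
      Primrec.nat_add.comp (Primrec.snd.comp .snd) (Primrec.fst.comp (Primrec.fst.comp .snd))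
    exact (Primrec.succ.comp hsum).pair
      (Primrec.list_concat.comp (Primrec.snd.comp (Primrec.fst.comp .snd)) hsum)
  exact (Primrec.snd.comp (Primrec.list_foldl .fst (Primrec.pair .snd (.const [])) hstep)).of_eq
    fun p => by simpa using foldl_raise'_eq p.1 p.2 []

-- `Primcodable (Finset ℕ)` comes from the `Denumerable` encoding, which codes a finset by the
-- gaps of its increasing enumeration.
theorem sort_ofNat_finset (n : ℕ) :
    (ofNat (Finset ℕ) n).sort (· ≤ ·) = raise' (ofNat (List ℕ) n) 0 := by
  have : ofNat (Finset ℕ) n = raise'Finset (ofNat (List ℕ) n) 0 := by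
    rw [show ofNat (Finset ℕ) n
      = (raise'Finset (ofNat (List ℕ) n) 0).map (eqv ℕ).symm.toEmbedding from rfl]
    exact Finset.map_refl
  rw [this, ← Finset.sort_val]
  exact (Multiset.coe_sort _ _).trans
    (List.mergeSort_eq_self _ (raise'_sorted _ _).sortedLE.pairwise)

theorem Primrec.finset_sort_nat : Primrec fun s : Finset ℕ => s.sort (· ≤ ·) :=
  Primrec.ofNat_iff.2 <| (Primrec.raise'.comp (Primrec.ofNat _) (.const 0)).of_eq
    fun n => (sort_ofNat_finset n).symm

def firstOdd (D : Finset ℕ) : Option ℕ := (D.sort (· ≤ ·)).find? fun x => ¬Even x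

theorem firstOdd_eq_none {D : Finset ℕ} (h : ↑D ⊆ Ev) : firstOdd D = none :=
  List.find?_eq_none.2 fun x hx => by simpa using show Even x from h ((Finset.mem_sort _).1 hx)

theorem firstOdd_eq_some {D : Finset ℕ} {m : ℕ} (hm : m ∈ D) (hodd : ¬Even m)
    (huniq : ∀ x ∈ D, ¬Even x → x = m) : firstOdd D = some m := by
  have hsome : (firstOdd D).isSome :=
    List.find?_isSome.2 ⟨m, (Finset.mem_sort _).2 hm, decide_eq_true hodd⟩
  obtain ⟨y, hy⟩ := Option.isSome_iff_exists.1 hsome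
  have hyD : y ∈ D := (Finset.mem_sort _).1 (List.mem_of_find?_eq_some hy)
  rw [hy, huniq y hyD (by simpa using List.find?_some hy)]

theorem Primrec.firstOdd : Primrec firstOdd :=
  (Primrec.list_head?.comp ((Primrec.listFilter primrecPred_even.not).comp
    Primrec.finset_sort_nat)).of_eq fun _ => List.head?_filter

-- For odd `m`, the paper's `L_m` is `Lodd (m / 2)`.
noncomputable def learner (D : Finset ℕ) : ℕ :=
  (firstOdd D).elim (encode evCode) fun m => encode (loddCode.curry (m / 2))

theorem learner_computable : Computable learner :=
  (Primrec.option_casesOn Primrec.firstOdd (.const (encode evCode))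
    (Primrec.encode.comp (primrec₂_curry.comp (.const loddCode)
      (Primrec.nat_div.comp .snd (.const 2)))).to₂).to_comp.of_eq
    fun D => by rw [learner]; cases firstOdd D <;> rfl

theorem learner_of_subset_Ev {D : Finset ℕ} (h : ↑D ⊆ Ev) : learner D = encode evCode := by
  rw [learner, firstOdd_eq_none h, Option.elim_none]

theorem learner_of_subset_Lodd_of_mem {D : Finset ℕ} {k : ℕ} (h : ↑D ⊆ Lodd k)
    (hm : 2 * k + 1 ∈ D) : learner D = encode (loddCode.curry k) := by
  have huniq : ∀ x ∈ D, ¬Even x → x = 2 * k + 1 := fun x hx hodd =>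
    (h hx).resolve_left fun hx' => hodd hx'.1
  rw [learner, firstOdd_eq_some hm (by simp) huniq, Option.elim_some]
  congr
  omega

theorem learner_of_subset_Lodd_of_notMem {D : Finset ℕ} {k : ℕ} (h : ↑D ⊆ Lodd k)
    (hm : 2 * k + 1 ∉ D) : learner D = encode evCode :=
  learner_of_subset_Ev fun _ hx => ((h hx).resolve_right fun e => hm (e ▸ hx)).1

theorem mem_fset {T : Text} {n x : ℕ} : x ∈ fset T n ↔ ∃ m < n, T m = some x := by
  rw [fset, List.mem_toFinset, List.reduceOption_mem_iff]
  exact List.mem_map.trans (by simp only [List.mem_range])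

theorem fset_mono (T : Text) : Monotone (fset T) := fun _ _ hij _ hx =>
  let ⟨m, hm, hTm⟩ := mem_fset.1 hx
  mem_fset.2 ⟨m, hm.trans_le hij, hTm⟩

theorem coe_fset_subset_content (T : Text) (n : ℕ) : ↑(fset T n) ⊆ content T := fun _ hx =>
  let ⟨m, _, hTm⟩ := mem_fset.1 hx
  ⟨m, hTm⟩

theorem exists_mem_fset_of_mem_content {T : Text} {x : ℕ} (hx : x ∈ content T) :
    ∃ n, x ∈ fset T n :=
  let ⟨m, hTm⟩ := hx
  ⟨m + 1, mem_fset.2 ⟨m, m.lt_succ_self, hTm⟩⟩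

/-- the class {2ℕ} ∪ {L_{2k+1} : k ∈ ℕ} is learnable by a total computable
set-driven learner which converges syntactically on each text of each language of the class
and whose hypothesis sequence is monotone on each such text. -/
theorem sepClass_RSdMonEx_learnable :
    ∃ h : Finset ℕ → ℕ, Computable h ∧
      ∀ L ∈ sepClass, ∀ T : Text, content T = L →
        (∃ e : ℕ, Wset e = L ∧ ∃ n₀ : ℕ, ∀ n ≥ n₀, h (fset T n) = e) ∧
        (∀ i j : ℕ, i ≤ j →
          Wset (h (fset T i)) ∩ content T ⊆ Wset (h (fset T j)) ∩ content T) := by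
  refine ⟨learner, learner_computable, ?_⟩
  rintro L (rfl | ⟨k, rfl⟩) T hT <;> have hsub := fun n => hT ▸ coe_fset_subset_content T n
  · have hconst n : learner (fset T n) = encode evCode := learner_of_subset_Ev (hsub n)
    exact ⟨⟨_, Wset_evCode, 0, fun n _ => hconst n⟩, fun i j _ => by rw [hconst i, hconst j]⟩
  · obtain ⟨n₀, hn₀⟩ := exists_mem_fset_of_mem_content (hT ▸ Or.inr rfl : 2 * k + 1 ∈ content T)
    refine ⟨⟨_, Wset_loddCode_curry k, n₀, fun n hn =>
      learner_of_subset_Lodd_of_mem (hsub n) (fset_mono T hn hn₀)⟩, fun i j hij => ?_⟩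
    by_cases hj : 2 * k + 1 ∈ fset T j
    · rw [learner_of_subset_Lodd_of_mem (hsub j) hj, Wset_loddCode_curry, hT, Set.inter_self]
      exact Set.inter_subset_right
    · have hi : 2 * k + 1 ∉ fset T i := fun hi => hj (fset_mono T hij hi)
      rw [learner_of_subset_Lodd_of_notMem (hsub i) hi,
        learner_of_subset_Lodd_of_notMem (hsub j) hj]
end

section
/- No learner strongly-monotonically behaviourally-correctly learns the class L = {2ℕ} ∪ {{0, 2, 4, …, 2k, 2k+1} : k ∈ ℕ} from text: for every (partial computable) Gold-style learner h', if h' Bc-learns 2ℕ from every text and is strongly monotone on texts of languages it learns, then there is some k and a text of L_{2k+1} on which h' fails to Bc-learn L_{2k+1} or violates strong monotonicity. -/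
/-- A partial Gold-style learner Bc-learns `L` on the text `T`. -/
def BcOn (h : List (Option ℕ) →. ℕ) (T : Text) (L : Set ℕ) : Prop :=
  ∃ n₀ : ℕ, ∀ n ≥ n₀, ∃ e ∈ h (seg T n), Wset e = L

/-- A partial Gold-style learner is strongly monotone on the text `T`. -/
def SMonOn (h : List (Option ℕ) →. ℕ) (T : Text) : Prop :=
  ∀ i j : ℕ, i ≤ j → ∀ a ∈ h (seg T i), ∀ b ∈ h (seg T j), Wset a ⊆ Wset b

/-- no partial computable Gold-style learner that Bc-learns 2ℕ from every
text, strongly monotonically, can strongly-monotonically Bc-learn every L_{2k+1}: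
some k and some text of L_{2k+1} witness a failure of Bc-learning or of strong
monotonicity. -/
theorem no_SMonBc_learner_for_sepClass (h' : List (Option ℕ) →. ℕ)
    (hcomp : Partrec h')
    (hEv : ∀ T : Text, content T = Ev → BcOn h' T Ev)
    (hEvSMon : ∀ T : Text, content T = Ev → SMonOn h' T) :
    ∃ k : ℕ, ∃ T : Text, content T = Lodd k ∧
      (¬ BcOn h' T (Lodd k) ∨ ¬ SMonOn h' T) := by
  classical
  set T₀ : Text := fun n => some (2 * n) with hT₀
  have hc0 : content T₀ = Ev := by
    ext x
    constructor
    · rintro ⟨n, hn⟩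
      simp only [hT₀, Option.some.injEq] at hn
      exact ⟨n, by omega⟩
    · rintro ⟨m, hm⟩
      exact ⟨m, by simp only [hT₀, Option.some.injEq]; omega⟩
  obtain ⟨n₀, hBc0⟩ := hEv T₀ hc0
  refine ⟨n₀, ?_⟩
  set k := n₀ with hk
  set T : Text := fun n =>
    if n < n₀ then some (2 * n)
    else if n - n₀ ≤ k then some (2 * (n - n₀)) else some (2 * k + 1) with hT
  have hcT : content T = Lodd k := by
    ext x
    constructor
    · rintro ⟨n, hn⟩
      simp only [hT] at hn
      split_ifs at hn with h1 h2 <;> simp only [Option.some.injEq] at hn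
      · exact Or.inl ⟨⟨n, by omega⟩, by omega⟩
      · exact Or.inl ⟨⟨n - n₀, by omega⟩, by omega⟩
      · exact Or.inr (by omega)
    · rintro (⟨⟨m, hm⟩, hle⟩ | hx)
      · refine ⟨n₀ + m, ?_⟩
        simp only [hT]
        rw [if_neg (by omega), if_pos (by omega)]
        simp only [Option.some.injEq]; omega
      · refine ⟨n₀ + k + 1, ?_⟩
        simp only [hT]
        rw [if_neg (by omega), if_neg (by omega)]
        simp only [Option.some.injEq]; omega
  refine ⟨T, hcT, ?_⟩
  by_contra hcon
  push_neg at hcon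
  obtain ⟨⟨n₁, hBc1⟩, hSMon⟩ := hcon
  have hseg : seg T n₀ = seg T₀ n₀ := by
    unfold seg
    apply List.map_congr_left
    intro n hn
    rw [List.mem_range] at hn
    simp only [hT, hT₀, if_pos hn]
  obtain ⟨e, he, hWe⟩ := hBc0 n₀ le_rfl
  obtain ⟨b, hb, hWb⟩ := hBc1 (max n₀ n₁) (le_max_right _ _)
  have hsub : Wset e ⊆ Wset b := by
    refine hSMon n₀ (max n₀ n₁) (le_max_left _ _) e ?_ b hb
    rw [hseg]; exact he
  rw [hWe, hWb] at hsub
  have hmem : (2 * k + 2 : ℕ) ∈ Ev := ⟨k + 1, by ring⟩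
  have := hsub hmem
  rcases this with ⟨_, h2⟩ | h2 <;> omega
end

section
/- Gold-style behaviourally correct learning under any delayable restriction is closed under requiring totality of the learner: for every delayable restriction δ, [RTxtGδ] = [TxtGδ]; and for every semantic restriction δ' and every interaction operator β ∈ {G, Psd, Sd}, [RTxtβδ'] = [Txtβδ']. -/
/-- A restriction on (total) hypothesis sequences and texts. -/
abbrev Restriction := (ℕ → ℕ) → Text → Prop

/-- δ is delayable. -/
def Delayable (δ : Restriction) : Prop :=
  ∀ T T' : Text, content T = content T' →
    ∀ p : ℕ → ℕ, ∀ r : ℕ → ℕ, Monotone r → (∀ m : ℕ, ∃ n : ℕ, m ≤ r n) →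
      δ p T → (∀ n : ℕ, contentSeg (seg T (r n)) ⊆ contentSeg (seg T' n)) →
      δ (p ∘ r) T'

/-- δ is semantic. -/
def Semantic (δ : Restriction) : Prop :=
  ∀ p p' : ℕ → ℕ, ∀ T : Text, δ p T → (∀ n : ℕ, Wset (p n) = Wset (p' n)) → δ p' T

/-- A partial learner with inputs of type α learns `L` under δ via the given way of
extracting the stage-`n` input from a text. -/
def LearnsVia {α : Type} (inp : Text → ℕ → α) (h : α →. ℕ) (δ : Restriction)
    (L : Set ℕ) : Prop :=
  ∀ T : Text, content T = L →
    ∃ p : ℕ → ℕ, (∀ n : ℕ, h (inp T n) = Part.some (p n)) ∧ δ p T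

/-- Classes learnable by a partial computable learner. -/
def PClass {α : Type} [Primcodable α] (inp : Text → ℕ → α) (δ : Restriction) :
    Set (Set (Set ℕ)) :=
  {𝓛 | ∃ h : α →. ℕ, Partrec h ∧ ∀ L ∈ 𝓛, LearnsVia inp h δ L}

/-- Classes learnable by a total computable learner. -/
def RClass {α : Type} [Primcodable α] (inp : Text → ℕ → α) (δ : Restriction) :
    Set (Set (Set ℕ)) :=
  {𝓛 | ∃ h : α → ℕ, Computable h ∧ ∀ L ∈ 𝓛, LearnsVia inp (fun a => Part.some (h a)) δ L}

/-- The three interaction operators, as input-extraction maps. -/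
def inpG : Text → ℕ → List (Option ℕ) := fun T n => seg T n
def inpPsd : Text → ℕ → Finset ℕ × ℕ := fun T n => (fset T n, n)
def inpSd : Text → ℕ → Finset ℕ := fun T n => fset T n

/-!
For a semantic restriction, a partial learner `h` is made total by replacing its conjecture on
an input `a` by an index of the program "on `x`, compute `e := h a`, then run `φ_e x`": this is
total in `a` by the s-m-n theorem, and it enumerates `W_e` whenever `h a = e`.

For a delayable restriction and Gold-style input `σ`, the total learner simulates `h` for `|σ|`
steps on every prefix of `σ` and outputs its conjecture on the longest prefix on which that
simulation halts (or `h []` if there is none). On a text `T` this produces `p ∘ r`, where `p` is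
the hypothesis sequence of `h` on `T` and `r n ≤ n` is monotone and unbounded, hence a delay.
-/

open Nat.Partrec (Code)
open Nat.Partrec.Code Encodable

lemma RClass_subset_PClass {α : Type} [Primcodable α] (inp : Text → ℕ → α) (δ : Restriction) :
    RClass inp δ ⊆ PClass inp δ := by
  rintro 𝓛 ⟨h, hh, hlearn⟩
  exact ⟨fun a => Part.some (h a), hh, hlearn⟩

lemma exists_code_eval_encode_of_partrec {α : Type} [Primcodable α] {f : α →. ℕ}
    (hf : Partrec f) : ∃ c : Code, ∀ a, c.eval (encode a) = f a := by
  obtain ⟨c, hc⟩ := Code.exists_code.1 hf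
  exact ⟨c, fun a => by simp [hc, encodek, Part.map_id' encode_nat]⟩

lemma exists_computable_wset_eq_of_partrec {α : Type} [Primcodable α] {h : α →. ℕ}
    (hh : Partrec h) :
    ∃ k : α → ℕ, Computable k ∧ ∀ a e, h a = Part.some e → Wset (k a) = Wset e := by
  have hcomp : Partrec fun q : α × ℕ =>
      (h q.1).bind fun e => (Denumerable.ofNat Code e).eval q.2 :=
    (hh.comp Computable.fst).bind
      (eval_part.comp ((Computable.ofNat Code).comp .snd) (Computable.snd.comp .fst))
  obtain ⟨c, hc⟩ := exists_code_eval_encode_of_partrec hcomp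
  refine ⟨fun a => encode (c.curry (encode a)),
    (Primrec.encode.comp (primrec₂_curry.comp (.const c) .encode)).to_comp, fun a e he => ?_⟩
  ext x
  have hx : (Denumerable.ofNat Code (encode (c.curry (encode a)))).eval x =
      (Denumerable.ofNat Code e).eval x := by
    have hpair : Nat.pair (encode a) x = encode (a, x) := by rw [encode_prod_val, encode_nat]
    rw [Denumerable.ofNat_encode, eval_curry, hpair, hc, he, Part.bind_some]
  exact Iff.of_eq (congrArg Part.Dom hx)

lemma semantic_normal_form {α : Type} [Primcodable α] (inp : Text → ℕ → α) (δ : Restriction)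
    (hδ : Semantic δ) : RClass inp δ = PClass inp δ := by
  refine (RClass_subset_PClass inp δ).antisymm ?_
  rintro 𝓛 ⟨h, hh, hlearn⟩
  obtain ⟨k, hk, hwset⟩ := exists_computable_wset_eq_of_partrec hh
  refine ⟨k, hk, fun L hL T hT => ?_⟩
  obtain ⟨p, hp, hδp⟩ := hlearn L hL T hT
  exact ⟨fun n => k (inp T n), fun n => rfl, hδ p _ T hδp fun n => (hwset _ _ (hp n)).symm⟩

lemma seg_length (T : Text) (n : ℕ) : (seg T n).length = n := by
  unfold seg; exact (List.length_map ..).trans List.length_range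

lemma take_seg (T : Text) {m n : ℕ} (h : m ≤ n) : (seg T n).take m = seg T m := by
  unfold seg
  exact (List.map_take ..).symm.trans
    (congrArg (List.map T) (by rw [List.take_range, Nat.min_eq_left h]))

lemma contentSeg_seg_mono (T : Text) {m n : ℕ} (h : m ≤ n) :
    contentSeg (seg T m) ⊆ contentSeg (seg T n) := fun _ hx =>
  List.mem_of_mem_take (l := seg T n) (i := m) ((take_seg T h).symm ▸ hx)

section Totalize

variable (c : Code)

def evalPrefix (σ : List (Option ℕ)) (m : ℕ) : Option ℕ :=
  evaln σ.length c (encode (σ.take m))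

/-- The bound `m ≤ σ.length` makes `HaltsOnPrefix c (seg T n) m` monotone in `n`
(beyond `σ.length`, `σ.take m` would no longer grow with `m`). -/
def HaltsOnPrefix (σ : List (Option ℕ)) (m : ℕ) : Prop :=
  m ≤ σ.length ∧ (evalPrefix c σ m).isSome

instance : DecidableRel (HaltsOnPrefix c) := fun _ _ => instDecidableAnd

def lastHaltingPrefix (σ : List (Option ℕ)) : ℕ :=
  Nat.findGreatest (HaltsOnPrefix c σ) σ.length

def totalize (e₀ : ℕ) (σ : List (Option ℕ)) : ℕ :=
  (evalPrefix c σ (lastHaltingPrefix c σ)).getD e₀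

def delay (T : Text) (n : ℕ) : ℕ :=
  lastHaltingPrefix c (seg T n)

lemma primrec_evalPrefix : Primrec₂ (evalPrefix c) :=
  primrec_evaln.comp (((Primrec.list_length.comp .fst).pair (.const c)).pair
    (Primrec.encode.comp (Primrec.list_take.comp .snd .fst)))

lemma computable_totalize (e₀ : ℕ) : Computable (totalize c e₀) := by
  have hhalts : PrimrecRel (HaltsOnPrefix c) :=
    (Primrec.nat_le.comp .snd (Primrec.list_length.comp .fst)).and
      (Primrec.primrecPred ((Primrec.option_isSome.comp (primrec_evalPrefix c)).of_eq
        fun _ => Bool.decide_eq_true.symm))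
  have hlast : Primrec (lastHaltingPrefix c) :=
    Primrec.nat_findGreatest Primrec.list_length hhalts
  exact (Primrec.option_getD.comp ((primrec_evalPrefix c).comp .id hlast) (.const e₀)).to_comp

lemma evalPrefix_seg (T : Text) {m n : ℕ} (h : m ≤ n) :
    evalPrefix c (seg T n) m = evaln n c (encode (seg T m)) := by
  rw [evalPrefix, seg_length, take_seg T h]

lemma haltsOnPrefix_seg_iff (T : Text) (n m : ℕ) :
    HaltsOnPrefix c (seg T n) m ↔ m ≤ n ∧ (evaln n c (encode (seg T m))).isSome := by
  rw [HaltsOnPrefix, seg_length]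
  exact and_congr_right fun h => by rw [evalPrefix_seg c T h]

lemma delay_le (T : Text) (n : ℕ) : delay c T n ≤ n :=
  (Nat.findGreatest_le _).trans_eq (seg_length T n)

lemma monotone_delay (T : Text) : Monotone (delay c T) := by
  refine monotone_nat_of_le_succ fun n => Nat.findGreatest_mono (fun m hm => ?_) ?_
  · obtain ⟨hmn, hsome⟩ := (haltsOnPrefix_seg_iff c T n m).1 hm
    obtain ⟨v, hv⟩ := Option.isSome_iff_exists.1 hsome
    exact (haltsOnPrefix_seg_iff c T (n + 1) m).2
      ⟨hmn.trans n.le_succ, Option.isSome_iff_exists.2 ⟨v, evaln_mono n.le_succ hv⟩⟩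
  · simp only [seg_length, n.le_succ]

variable {c} {T : Text} {p : ℕ → ℕ}

lemma delay_unbounded (hp : ∀ n, c.eval (encode (seg T n)) = Part.some (p n)) (m : ℕ) :
    ∃ n, m ≤ delay c T n := by
  obtain ⟨s, hs⟩ := evaln_complete.1 ((hp m).symm ▸ Part.mem_some (p m))
  refine ⟨max m s, Nat.le_findGreatest (by simp [seg_length]) ?_⟩
  exact (haltsOnPrefix_seg_iff c T _ m).2
    ⟨le_max_left m s, Option.isSome_iff_exists.2 ⟨p m, evaln_mono (le_max_right m s) hs⟩⟩

lemma totalize_seg (hp : ∀ n, c.eval (encode (seg T n)) = Part.some (p n)) (n : ℕ) :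
    totalize c (p 0) (seg T n) = p (delay c T n) := by
  change (evalPrefix c (seg T n) (delay c T n)).getD (p 0) = p (delay c T n)
  rw [evalPrefix_seg c T (delay_le c T n)]
  rcases hv : evaln n c (encode (seg T (delay c T n))) with _ | v
  · have hzero : delay c T n = 0 := by
      by_contra hne
      obtain ⟨-, hsome⟩ := (haltsOnPrefix_seg_iff c T n _).1
        (Nat.findGreatest_of_ne_zero (m := delay c T n) rfl hne)
      rw [hv] at hsome
      exact Bool.false_ne_true hsome
    rw [hzero, Option.getD_none]
  · have hmem := evaln_sound hv
    rw [hp] at hmem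
    exact Part.mem_some_iff.1 hmem

end Totalize

lemma delayable_normal_form (δ : Restriction) (hδ : Delayable δ) :
    RClass inpG δ = PClass inpG δ := by
  refine (RClass_subset_PClass inpG δ).antisymm ?_
  rintro 𝓛 ⟨h, hh, hlearn⟩
  obtain ⟨c, hc⟩ := exists_code_eval_encode_of_partrec hh
  obtain ⟨e₀, he₀⟩ : ∃ e₀, ∀ e, h [] = Part.some e → e = e₀ := by
    by_cases hdom : (h []).Dom
    · exact ⟨(h []).get hdom, fun e he => by simp [he]⟩
    · exact ⟨0, fun e he => absurd (he ▸ trivial) hdom⟩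
  refine ⟨totalize c e₀, computable_totalize c e₀, fun L hL T hT => ?_⟩
  obtain ⟨p, hp, hδp⟩ := hlearn L hL T hT
  have hcp : ∀ n, c.eval (encode (seg T n)) = Part.some (p n) := fun n => (hc _).trans (hp n)
  obtain rfl : p 0 = e₀ := he₀ _ (hp 0)
  refine ⟨p ∘ delay c T, fun n => congrArg Part.some (totalize_seg hcp n), ?_⟩
  exact hδ T T rfl p _ (monotone_delay c T) (delay_unbounded hcp) hδp
    fun n => contentSeg_seg_mono T (delay_le c T n)

/-- for delayable δ, [RTxtGδ] = [TxtGδ]; and for semantic δ' and every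
interaction operator β ∈ {G, Psd, Sd}, [RTxtβδ'] = [Txtβδ']. -/
theorem totality_normal_form :
    (∀ δ : Restriction, Delayable δ → RClass inpG δ = PClass inpG δ) ∧
    (∀ δ' : Restriction, Semantic δ' →
      RClass inpG δ' = PClass inpG δ' ∧
      RClass inpPsd δ' = PClass inpPsd δ' ∧
      RClass inpSd δ' = PClass inpSd δ') :=
  ⟨delayable_normal_form,
    fun δ' hδ' => ⟨semantic_normal_form inpG δ' hδ', semantic_normal_form inpPsd δ' hδ',
      semantic_normal_form inpSd δ' hδ'⟩⟩
end
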